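/- arXiv:1907.12913 — 3 statements merged into one kernel-verified Lean document; each statement's English description precedes it below -/
import Mathlib

section
/- (Inter-agent collision avoidance part of Theorem 1.) Let ε > 0 and δ ≥ 0. Let r₁⁰, …, r_N⁰ ∈ ℝ^d be initial agent positions whose pairwise distances satisfy ‖rᵢ⁰ − rⱼ⁰‖₂ ≥ D_B for all i ≠ j, where D_B > 2ε. Set δ_max = (D_B − 2ε)/2 and λ_min = (δ + ε)/(δ_max + ε). Let Q : ℝ^d → ℝ^d be a linear map with ‖Q v‖₂ ≥ λ_min ‖v‖₂ for all v, let b ∈ ℝ^d, define desired positions rᵢᴴᵀ = Q rᵢ⁰ + b, and let actual positions rᵢ ∈ ℝ^d satisfy ‖rᵢ − rᵢᴴᵀ‖₂ ≤ δ for all i. Then ‖rᵢ − rⱼ‖₂ ≥ 2ε for all i ≠ j. -/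
/-!
Two agents tracking the homogeneous transformation to within `δ` are at least
`‖Q (rᵢ⁰ - rⱼ⁰)‖ - 2δ` apart, by the triangle inequality through their desired positions.
The expansion bound on `Q` and the initial separation give `‖Q (rᵢ⁰ - rⱼ⁰)‖ ≥ λ_min D_B`,
and `λ_min` is chosen exactly so that `λ_min D_B = 2δ + 2ε`.
-/

lemma norm_map_sub_le_of_norm_sub_affine_le {E F G : Type*} [AddCommGroup E]
    [SeminormedAddCommGroup F] [FunLike G E F] [AddMonoidHomClass G E F]
    (Q : G) (b : F) {x y : E} {p q : F} {δ : ℝ}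
    (hp : ‖p - (Q x + b)‖ ≤ δ) (hq : ‖q - (Q y + b)‖ ≤ δ) :
    ‖Q (x - y)‖ ≤ ‖p - q‖ + 2 * δ := by
  calc ‖Q (x - y)‖ = dist (Q x + b) (Q y + b) := by
        rw [dist_eq_norm, map_sub, add_sub_add_right_eq_sub]
    _ ≤ dist p (Q x + b) + dist p q + dist q (Q y + b) := by
        simpa only [dist_comm p] using dist_triangle4 (Q x + b) p q (Q y + b)
    _ ≤ ‖p - q‖ + 2 * δ := by
        rw [dist_eq_norm, dist_eq_norm, dist_eq_norm]
        linarith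

/-- Inter-agent collision avoidance part of Theorem 1: if initial positions are pairwise
at distance at least `D_B > 2ε`, `δ_max = (D_B − 2ε)/2`, `λ_min = (δ+ε)/(δ_max+ε)`, the
linear part `Q` of the homogeneous transformation satisfies `‖Qv‖ ≥ λ_min‖v‖`, and every
actual position deviates at most `δ` from its desired position `Q rᵢ⁰ + b`, then any two
distinct agents stay at distance at least `2ε`. -/
theorem stmt_13 {d N : ℕ}
    (ε δ D_B : ℝ) (hε : 0 < ε) (hδ : 0 ≤ δ) (hDB : 2 * ε < D_B)
    (r0 : Fin N → EuclideanSpace ℝ (Fin d))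
    (hsep : ∀ i j, i ≠ j → D_B ≤ ‖r0 i - r0 j‖)
    (δmax : ℝ) (hδmax : δmax = (D_B - 2 * ε) / 2)
    (lammin : ℝ) (hlam : lammin = (δ + ε) / (δmax + ε))
    (Q : EuclideanSpace ℝ (Fin d) →ₗ[ℝ] EuclideanSpace ℝ (Fin d))
    (hQ : ∀ v, lammin * ‖v‖ ≤ ‖Q v‖)
    (b : EuclideanSpace ℝ (Fin d))
    (r : Fin N → EuclideanSpace ℝ (Fin d))
    (hdev : ∀ i, ‖r i - (Q (r0 i) + b)‖ ≤ δ) :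
    ∀ i j, i ≠ j → 2 * ε ≤ ‖r i - r j‖ := by
  intro i j hij
  have hden : δmax + ε = D_B / 2 := by rw [hδmax]; ring
  have hlam_nonneg : 0 ≤ lammin := hlam ▸ div_nonneg (by linarith) (by linarith)
  have hlam_mul : lammin * D_B = 2 * δ + 2 * ε := by
    rw [hlam, hden]
    field_simp [show D_B ≠ 0 by linarith]
  calc 2 * ε = lammin * D_B - 2 * δ := by linarith
    _ ≤ lammin * ‖r0 i - r0 j‖ - 2 * δ := by gcongr; exact hsep i j hij
    _ ≤ ‖Q (r0 i - r0 j)‖ - 2 * δ := by gcongr; exact hQ _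
    _ ≤ ‖r i - r j‖ := by
      linarith [norm_map_sub_le_of_norm_sub_affine_le Q b (hdev i) (hdev j)]
end

section
/- (Agent containment part of Theorem 1.) Let ε > 0, δ ≥ 0, and D_S > ε; set δ_max = D_S − ε and λ_min = (δ + ε)/(δ_max + ε). Let a₁, …, a_{d+1} ∈ ℝ^d be affinely independent (the leaders' initial positions) with leading simplex S⁰ = convexHull{a₁, …, a_{d+1}}, and let r⁰ ∈ S⁰ be a follower's initial position whose distance to the complement of S⁰ satisfies infdist(r⁰, (S⁰)ᶜ) ≥ D_S. Let Q : ℝ^d → ℝ^d be an invertible linear map with ‖Q v‖₂ ≥ λ_min ‖v‖₂ for all v, let b ∈ ℝ^d, and let the follower's actual position r satisfy ‖r − (Q r⁰ + b)‖₂ ≤ δ. Then r lies in the deformed leading simplex convexHull{Q a₁ + b, …, Q a_{d+1} + b}, and moreover infdist(r, (convexHull{Q a₁ + b, …, Q a_{d+1} + b})ᶜ) ≥ ε. -/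
/-- Agent containment part of Theorem 1: a follower initially at boundary distance at least
`D_S > ε` from the complement of the leading simplex, whose actual position deviates at most
`δ` from its homogeneously transformed desired position, remains inside the deformed leading
simplex, at boundary distance at least `ε` (safety condition ψ₂). -/
theorem stmt_14 {d : ℕ}
    (ε δ D_S : ℝ) (hε : 0 < ε) (hδ : 0 ≤ δ) (hDS : ε < D_S)
    (δmax : ℝ) (hδmax : δmax = D_S - ε)
    (lammin : ℝ) (hlam : lammin = (δ + ε) / (δmax + ε))
    (a : Fin (d + 1) → EuclideanSpace ℝ (Fin d))
    (ha : AffineIndependent ℝ a)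
    (r0 : EuclideanSpace ℝ (Fin d))
    (hr0 : r0 ∈ convexHull ℝ (Set.range a))
    (hbd : D_S ≤ Metric.infDist r0 (convexHull ℝ (Set.range a))ᶜ)
    (Q : EuclideanSpace ℝ (Fin d) →ₗ[ℝ] EuclideanSpace ℝ (Fin d))
    (hQinv : Function.Bijective Q)
    (hQ : ∀ v, lammin * ‖v‖ ≤ ‖Q v‖)
    (b : EuclideanSpace ℝ (Fin d))
    (r : EuclideanSpace ℝ (Fin d))
    (hdev : ‖r - (Q r0 + b)‖ ≤ δ) :
    r ∈ convexHull ℝ (Set.range fun i => Q (a i) + b) ∧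
      ε ≤ Metric.infDist r (convexHull ℝ (Set.range fun i => Q (a i) + b))ᶜ := by
  subst hδmax
  have hden : D_S - ε + ε = D_S := by ring
  rw [hden] at hlam
  subst hlam
  have hDpos : 0 < D_S := lt_trans hε hDS
  have hlampos : 0 < (δ + ε) / D_S := by positivity
  set S := convexHull ℝ (Set.range a) with hS
  set T := convexHull ℝ (Set.range fun i => Q (a i) + b) with hT
  -- the affine map f x = Q x + b
  set f : EuclideanSpace ℝ (Fin d) →ᵃ[ℝ] EuclideanSpace ℝ (Fin d) :=
    { toFun := fun x => Q x + b
      linear := Q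
      map_vadd' := fun p v => by
        simp only [vadd_eq_add, map_add]
        abel }
  have hf : ∀ x, f x = Q x + b := fun x => rfl
  have hTimg : T = f '' S := by
    rw [hT, hS, AffineMap.image_convexHull, ← Set.range_comp]
    rfl
  -- the complement of S is nonempty
  have hScne : Sᶜ.Nonempty := by
    by_contra h
    rw [Set.not_nonempty_iff_eq_empty] at h
    rw [h, Metric.infDist_empty] at hbd
    linarith
  -- ball r0 D_S ⊆ S
  have hball : Metric.ball r0 D_S ⊆ S := by
    intro x hx
    by_contra hxS
    have h1 : Metric.infDist r0 Sᶜ ≤ dist r0 x := Metric.infDist_le_dist_of_mem hxS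
    have h2 : dist r0 x < D_S := by rw [dist_comm]; exact hx
    linarith
  -- ball r ε ⊆ T
  have hkey : Metric.ball r ε ⊆ T := by
    intro y hy
    obtain ⟨x, hx⟩ := hQinv.2 (y - b)
    have hQx : Q (x - r0) = y - (Q r0 + b) := by
      rw [map_sub, hx]; abel
    have hnorm : ((δ + ε) / D_S) * ‖x - r0‖ ≤ ‖y - (Q r0 + b)‖ := by
      rw [← hQx]; exact hQ _
    have hy' : ‖y - (Q r0 + b)‖ < δ + ε := by
      have h1 : dist y r < ε := hy
      rw [dist_eq_norm] at h1
      have h2 : y - (Q r0 + b) = (y - r) + (r - (Q r0 + b)) := by abel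
      calc ‖y - (Q r0 + b)‖ ≤ ‖y - r‖ + ‖r - (Q r0 + b)‖ := by rw [h2]; exact norm_add_le _ _
        _ < δ + ε := by linarith
    have hcancel : ((δ + ε) / D_S) * D_S = δ + ε := div_mul_cancel₀ _ (ne_of_gt hDpos)
    have hxr0 : ‖x - r0‖ < D_S := by
      by_contra hc
      push_neg at hc
      have : ((δ + ε) / D_S) * D_S ≤ ((δ + ε) / D_S) * ‖x - r0‖ :=
        mul_le_mul_of_nonneg_left hc (le_of_lt hlampos)
      rw [hcancel] at this
      linarith
    have hxS : x ∈ S := hball (by rw [Metric.mem_ball, dist_eq_norm]; exact hxr0)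
    rw [hTimg]
    exact ⟨x, hxS, by rw [hf, hx]; abel⟩
  -- r ∈ T
  have hrT : r ∈ T := hkey (Metric.mem_ball_self hε)
  refine ⟨hrT, ?_⟩
  -- Tᶜ nonempty
  obtain ⟨z, hz⟩ := hScne
  have hTcne : Tᶜ.Nonempty := by
    refine ⟨f z, fun hfz => ?_⟩
    rw [hTimg] at hfz
    obtain ⟨x, hxS, hxz⟩ := hfz
    have : x = z := by
      apply hQinv.1
      have := hxz
      rw [hf, hf] at this
      exact add_right_cancel this
    exact hz (this ▸ hxS)
  by_contra hc
  push_neg at hc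
  obtain ⟨y, hyT, hyd⟩ := (Metric.infDist_lt_iff hTcne).1 hc
  exact hyT (hkey (by rwa [Metric.mem_ball, dist_comm]))
end

section
/- (Theorem 1, combined.) Let ε > 0 and δ ≥ 0. Let a₁, …, a_{d+1} ∈ ℝ^d be affinely independent leader initial positions with leading simplex S⁰ = convexHull{a₁, …, a_{d+1}}, and let r₁⁰, …, r_N⁰ ∈ S⁰ be initial agent positions (with rᵢ⁰ = aᵢ for i = 1, …, d+1). Let D_B > 2ε be such that ‖rᵢ⁰ − rⱼ⁰‖₂ ≥ D_B for all i ≠ j, and let D_S > ε be such that infdist(rᵢ⁰, (S⁰)ᶜ) ≥ D_S for every follower i ∈ {d+2, …, N}. Set δ_max = min{(D_B − 2ε)/2, D_S − ε} and λ_min = (δ + ε)/(δ_max + ε). Let Q : ℝ^d → ℝ^d be an invertible linear map with ‖Q v‖₂ ≥ λ_min ‖v‖₂ for all v, let b ∈ ℝ^d, and suppose the actual positions rᵢ satisfy ‖rᵢ − (Q rᵢ⁰ + b)‖₂ ≤ δ for all i = 1, …, N. Then (a) ‖rᵢ − rⱼ‖₂ ≥ 2ε for all i ≠ j, and (b) every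 follower's actual position rᵢ, i ∈ {d+2, …, N}, lies in the deformed leading simplex convexHull{Q a₁ + b, …, Q a_{d+1} + b}. -/
/-- Theorem 1 of the paper, combined: under the deviation bound `δ`, eigenvalue lower bound
`λ_min = (δ+ε)/(δ_max+ε)` with `δ_max = min{(D_B−2ε)/2, D_S−ε}`, minimum initial separation
`D_B` and minimum initial boundary distance `D_S`, the MAS satisfies (a) inter-agent
collision avoidance (ψ₃) and (b) follower containment in the deformed leading simplex (ψ₂). -/
theorem stmt_15 {d N : ℕ} (hN : d + 1 ≤ N)
    (ε δ D_B D_S : ℝ) (hε : 0 < ε) (hδ : 0 ≤ δ) (hDB : 2 * ε < D_B) (hDS : ε < D_S)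
    (r0 : Fin N → EuclideanSpace ℝ (Fin d))
    (ha : AffineIndependent ℝ (fun i : Fin (d + 1) => r0 (Fin.castLE hN i)))
    (hin : ∀ i, r0 i ∈ convexHull ℝ (Set.range fun k : Fin (d + 1) => r0 (Fin.castLE hN k)))
    (hsep : ∀ i j, i ≠ j → D_B ≤ ‖r0 i - r0 j‖)
    (hbd : ∀ i : Fin N, d + 1 ≤ (i : ℕ) →
      D_S ≤ Metric.infDist (r0 i)
        (convexHull ℝ (Set.range fun k : Fin (d + 1) => r0 (Fin.castLE hN k)))ᶜ)
    (δmax : ℝ) (hδmax : δmax = min ((D_B - 2 * ε) / 2) (D_S - ε))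
    (lammin : ℝ) (hlam : lammin = (δ + ε) / (δmax + ε))
    (Q : EuclideanSpace ℝ (Fin d) →ₗ[ℝ] EuclideanSpace ℝ (Fin d))
    (hQinv : Function.Bijective Q)
    (hQ : ∀ v, lammin * ‖v‖ ≤ ‖Q v‖)
    (b : EuclideanSpace ℝ (Fin d))
    (r : Fin N → EuclideanSpace ℝ (Fin d))
    (hdev : ∀ i, ‖r i - (Q (r0 i) + b)‖ ≤ δ) :
    (∀ i j, i ≠ j → 2 * ε ≤ ‖r i - r j‖) ∧
      (∀ i : Fin N, d + 1 ≤ (i : ℕ) →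
        r i ∈ convexHull ℝ (Set.range fun k : Fin (d + 1) => Q (r0 (Fin.castLE hN k)) + b)) := by

  have hδm1 : δmax ≤ (D_B - 2 * ε) / 2 := by rw [hδmax]; exact min_le_left _ _
  have hδm2 : δmax ≤ D_S - ε := by rw [hδmax]; exact min_le_right _ _
  have hδmpos : 0 < δmax := by
    rw [hδmax]; exact lt_min (by linarith) (by linarith)
  have hden : 0 < δmax + ε := by linarith
  have hlampos : 0 < lammin := by
    rw [hlam]; exact div_pos (by linarith) hden
  have hprod : lammin * (δmax + ε) = δ + ε := by
    rw [hlam]; field_simp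
  constructor
  · intro i j hij
    have h1 : lammin * D_B ≤ ‖Q (r0 i) - Q (r0 j)‖ := by
      rw [← map_sub]
      calc lammin * D_B ≤ lammin * ‖r0 i - r0 j‖ :=
            mul_le_mul_of_nonneg_left (hsep i j hij) hlampos.le
        _ ≤ ‖Q (r0 i - r0 j)‖ := hQ _
    have h2 : ‖Q (r0 i) - Q (r0 j)‖ ≤ ‖r i - r j‖ + 2 * δ := by
      have e : ‖Q (r0 i) - Q (r0 j)‖ = dist (Q (r0 i) + b) (Q (r0 j) + b) := by
        rw [dist_eq_norm]; congr 1; abel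
      have t := dist_triangle4 (Q (r0 i) + b) (r i) (r j) (Q (r0 j) + b)
      have d1 : dist (Q (r0 i) + b) (r i) ≤ δ := by
        rw [dist_comm, dist_eq_norm]; exact hdev i
      have d2 : dist (r j) (Q (r0 j) + b) ≤ δ := by
        rw [dist_eq_norm]; exact hdev j
      have d3 : dist (r i) (r j) = ‖r i - r j‖ := dist_eq_norm _ _
      rw [e]; linarith
    have h3 : lammin * D_B ≥ 2 * δ + 2 * ε := by
      nlinarith [mul_nonneg hlampos.le (show (0:ℝ) ≤ D_B - 2 * δmax - 2 * ε by linarith)]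
    linarith
  · intro i hi
    set S := convexHull ℝ (Set.range fun k : Fin (d + 1) => r0 (Fin.castLE hN k)) with hS
    let f : EuclideanSpace ℝ (Fin d) →ᵃ[ℝ] EuclideanSpace ℝ (Fin d) :=
      ⟨fun v => Q v + b, Q, by intro p v; simp [map_add]; abel⟩
    have himg : convexHull ℝ (Set.range fun k : Fin (d + 1) => Q (r0 (Fin.castLE hN k)) + b)
        = f '' S := by
      rw [hS, AffineMap.image_convexHull, ← Set.range_comp]; rfl
    rw [himg]
    by_contra hnot
    let e := LinearEquiv.ofBijective Q hQinv
    set y := e.symm (r i - b) with hy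
    have hQy : Q y = r i - b := e.apply_symm_apply (r i - b)
    have hyS : y ∉ S := by
      intro hyS
      exact hnot ⟨y, hyS, by show Q y + b = r i; rw [hQy]; abel⟩
    have hdist : D_S ≤ dist (r0 i) y :=
      le_trans (hbd i hi) (Metric.infDist_le_dist_of_mem hyS)
    have hnorm : ‖Q (r0 i) + b - r i‖ = ‖Q (r0 i - y)‖ := by
      rw [map_sub, hQy]; congr 1; abel
    have h4 : lammin * D_S ≤ ‖Q (r0 i) + b - r i‖ := by
      rw [hnorm]
      calc lammin * D_S ≤ lammin * ‖r0 i - y‖ := by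
            rw [← dist_eq_norm] at *
            exact mul_le_mul_of_nonneg_left hdist hlampos.le
        _ ≤ ‖Q (r0 i - y)‖ := hQ _
    have h5 : ‖Q (r0 i) + b - r i‖ ≤ δ := by
      rw [show Q (r0 i) + b - r i = -(r i - (Q (r0 i) + b)) by abel, norm_neg]
      exact hdev i
    have h6 : δ + ε ≤ lammin * D_S := by
      nlinarith [mul_nonneg hlampos.le (show (0:ℝ) ≤ D_S - (δmax + ε) by linarith)]
    linarith
end
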